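/- A function g ∈ S^30 is contained in S^29 if and only if φ(g) = 0, where φ(g) = Σ_{∅⊊S⊊[4]_0} (−1)^{|S|} g(r_S). -/

import Mathlib

/-! An `H`-conforming `g` is linear on each cell `C_π`, and `C_π` is spanned by the rays `r_S`
of its initial segments `S = {π 0, …, π k}`, so `g` is determined by the values
`v S = g (r_S)`, with `v ∅ = v [4]₀ = g 0 = 0`. Since `g_M (r_S) = [0 ∈ S] - [M ⊆ S]`, the
Möbius inversion `b` of `v` on the Boolean lattice (`v S = ∑_{T ⊆ S} b T`) gives
`g = -∑_M b M • g_M`. Here `g_∅ = g_{0} = 0`, and the remaining coefficient outside `S²⁹` is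
`-b [4]₀ = φ(g)`. Conversely `φ(g_M) = 0` whenever `∅ ≠ M ≠ [4]₀`, because the alternating sum
over the supersets of a proper subset vanishes. -/

open Finset

/-- Extend `x ∈ ℝ⁴` by the coordinate `x₀ = 0`, giving a vector indexed by `[4]₀ = {0,…,4}`. -/
noncomputable def ext (x : Fin 4 → ℝ) : Fin 5 → ℝ := Fin.cases 0 x

/-- The cell `C_π = {x ∈ ℝ⁴ : x_{π(0)} ≤ x_{π(1)} ≤ x_{π(2)} ≤ x_{π(3)} ≤ x_{π(4)}}` of the
hyperplane arrangement `H` (with the convention `x₀ = 0`). -/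
def cell (π : Equiv.Perm (Fin 5)) : Set (Fin 4 → ℝ) :=
  {x | ∀ i : Fin 4, ext x (π i.castSucc) ≤ ext x (π i.succ)}

/-- `g : ℝ⁴ → ℝ` is `H`-conforming: it is a positively homogeneous continuous function that
is linear on each cell `C_π` of the arrangement `H` (hence continuous piecewise linear). -/
def Hconforming (g : (Fin 4 → ℝ) → ℝ) : Prop :=
  Continuous g ∧ (∀ (lam : ℝ), 0 ≤ lam → ∀ x, g (lam • x) = lam * g x) ∧
    ∀ π : Equiv.Perm (Fin 5), ∃ a : Fin 4 → ℝ, ∀ x ∈ cell π, g x = ∑ j, a j * x j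

/-- The generator `r_S` of the ray `R_S`, for `∅ ⊊ S ⊊ [4]₀`: the 0/1 indicator vector of
the complement of `S` if `0 ∈ S`, and the 0/(−1) indicator vector of `S` if `0 ∉ S`. -/
noncomputable def ray (S : Finset (Fin 5)) : Fin 4 → ℝ := fun j =>
  if (0 : Fin 5) ∈ S then (if j.succ ∈ S then 0 else 1) else (if j.succ ∈ S then -1 else 0)

/-- `g_M(x) = max_{i ∈ M} x_i` (with the convention `x₀ = 0`; junk value `0` if `M = ∅`). -/
noncomputable def gM (M : Finset (Fin 5)) (x : Fin 4 → ℝ) : ℝ :=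
  if hM : M.Nonempty then M.sup' hM (ext x) else 0

/-- Membership in `S²⁹`, the span of the 29 functions `g_M` with `M ∉ {∅,{0}}`, `M ⊊ [4]₀`. -/
def InS29 (g : (Fin 4 → ℝ) → ℝ) : Prop :=
  ∃ c : Finset (Fin 5) → ℝ,
    (∀ M, ¬(M.Nonempty ∧ M ≠ {0} ∧ M ≠ Finset.univ) → c M = 0) ∧
    ∀ x, g x = ∑ M : Finset (Fin 5), c M * gM M x

/-- The linear functional `φ(g) = Σ_{∅ ⊊ S ⊊ [4]₀} (−1)^{|S|} g(r_S)`. -/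
noncomputable def phi (g : (Fin 4 → ℝ) → ℝ) : ℝ :=
  ∑ S ∈ Finset.univ.filter (fun S : Finset (Fin 5) => S.Nonempty ∧ S ≠ Finset.univ),
    (-1 : ℝ) ^ S.card * g (ray S)

theorem Fin.sum_ite_le_castSucc_sub {M : Type*} [AddCommGroup M] {n : ℕ}
    (f : Fin (n + 1) → M) (m : Fin (n + 1)) :
    ∑ k : Fin n, (if m ≤ k.castSucc then f k.succ - f k.castSucc else 0) =
      f (Fin.last n) - f m := by
  induction n with
  | zero => simp [Fin.fin_one_eq_zero m]
  | succ n ih =>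
    rw [Fin.sum_univ_castSucc]
    induction m using Fin.lastCases with
    | last => simp [Fin.castSucc_lt_last, not_le_of_gt]
    | cast m =>
      have h := ih (fun i => f i.castSucc) m
      simp only [Fin.castSucc_le_castSucc_iff, Fin.succ_castSucc] at h ⊢
      rw [h, if_pos (Fin.le_last m), Fin.succ_last]
      abel

section SubsetMoebius

variable {α R : Type*} [CommRing R]

def subsetMoebius (v : Finset α → R) (T : Finset α) : R :=
  (-1) ^ #T * ∑ U ∈ T.powerset, (-1) ^ #U * v U

theorem subsetMoebius_empty (v : Finset α → R) : subsetMoebius v ∅ = v ∅ := by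
  simp [subsetMoebius]

variable [DecidableEq α]

theorem sum_Icc_neg_one_pow_card {U S : Finset α} (h : U ⊆ S) :
    ∑ T ∈ Icc U S, (-1 : R) ^ #T = if U = S then (-1) ^ #S else 0 := by
  have hinj : Set.InjOn (U ∪ ·) (S \ U).powerset := fun A hA B hB hAB => by
    rw [mem_coe, mem_powerset, subset_sdiff] at hA hB
    rw [← union_sdiff_cancel_left hA.2.symm, ← union_sdiff_cancel_left hB.2.symm]
    exact congrArg (· \ U) hAB
  rw [Icc_eq_image_powerset h, sum_image hinj]
  have hcard : ∀ A ∈ (S \ U).powerset, #(U ∪ A) = #U + #A := fun A hA =>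
    card_union_of_disjoint (disjoint_of_subset_right (mem_powerset.1 hA) disjoint_sdiff)
  rw [sum_congr rfl fun A hA => by rw [hcard A hA, pow_add], ← mul_sum]
  have hsum : ∑ A ∈ (S \ U).powerset, (-1 : R) ^ #A = if S \ U = ∅ then 1 else 0 := by
    exact_mod_cast congrArg (Int.cast : ℤ → R) sum_powerset_neg_one_pow_card
  have hempty : S \ U = ∅ ↔ U = S :=
    sdiff_eq_empty_iff_subset.trans ⟨h.antisymm, fun hUS => hUS ▸ subset_rfl⟩
  rw [hsum]
  split_ifs <;> simp_all

theorem sum_powerset_subsetMoebius (v : Finset α → R) (S : Finset α) :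
    ∑ T ∈ S.powerset, subsetMoebius v T = v S := by
  simp only [subsetMoebius, mul_sum]
  rw [sum_comm' (t' := S.powerset) (s' := fun U => Icc U S) (fun T U => by
    simp only [mem_powerset, mem_Icc]; constructor
    · rintro ⟨hTS, hUT⟩; exact ⟨⟨hUT, hTS⟩, hUT.trans hTS⟩
    · rintro ⟨⟨hUT, hTS⟩, -⟩; exact ⟨hTS, hUT⟩)]
  simp_rw [← mul_assoc, ← sum_mul]
  rw [sum_eq_single_of_mem S (mem_powerset_self S) fun U hU hUS => by
    rw [sum_Icc_neg_one_pow_card (mem_powerset.1 hU), if_neg hUS, zero_mul, zero_mul]]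
  rw [sum_Icc_neg_one_pow_card subset_rfl, if_pos rfl, ← pow_add, ← two_mul, pow_mul]
  simp

theorem sum_superset_neg_one_pow_card [Fintype α] {M : Finset α} (hM : M ≠ univ) :
    ∑ S, (if M ⊆ S then (-1 : R) ^ #S else 0) = 0 := by
  rw [← sum_filter, show univ.filter (M ⊆ ·) = Icc M univ by ext; simp,
    sum_Icc_neg_one_pow_card (subset_univ M), if_neg hM]

end SubsetMoebius

theorem ext_apply_zero (x : Fin 4 → ℝ) : ext x 0 = 0 := rfl

theorem ext_apply_succ (x : Fin 4 → ℝ) (j : Fin 4) : ext x j.succ = x j := rfl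

theorem ext_zero_apply (i : Fin 5) : ext 0 i = 0 := by
  cases i using Fin.cases <;> rfl

theorem ext_ray (S : Finset (Fin 5)) (i : Fin 5) :
    ext (ray S) i = (if 0 ∈ S then 1 else 0) - (if i ∈ S then 1 else 0) := by
  cases i using Fin.cases with
  | zero => rw [ext_apply_zero]; split_ifs <;> norm_num
  | succ j => rw [ext_apply_succ, ray]; split_ifs <;> norm_num

theorem ray_empty : ray ∅ = 0 := funext fun j => by simp [ray]

theorem ray_univ : ray univ = 0 := funext fun j => by simp [ray]

theorem zero_mem_cell (π : Equiv.Perm (Fin 5)) : (0 : Fin 4 → ℝ) ∈ cell π := fun i => by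
  rw [ext_zero_apply, ext_zero_apply]

theorem exists_mem_cell (x : Fin 4 → ℝ) : ∃ π, x ∈ cell π :=
  ⟨Tuple.sort (ext x), fun i => Tuple.monotone_sort (ext x) (Fin.castSucc_le_succ i)⟩

def initialSegment (π : Equiv.Perm (Fin 5)) (k : Fin 4) : Finset (Fin 5) :=
  univ.filter fun i => π.symm i ≤ k.castSucc

theorem ray_initialSegment_mem_cell (π : Equiv.Perm (Fin 5)) (k : Fin 4) :
    ray (initialSegment π k) ∈ cell π := fun i => by
  simp only [ext_ray, initialSegment, mem_filter, mem_univ, true_and, Equiv.symm_apply_apply]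
  have : i.succ ≤ k.castSucc → i.castSucc ≤ k.castSucc := (Fin.castSucc_le_succ i).trans
  split_ifs <;> simp_all

theorem sum_smul_ray_initialSegment (x : Fin 4 → ℝ) (π : Equiv.Perm (Fin 5)) :
    ∑ k, (ext x (π k.succ) - ext x (π k.castSucc)) • ray (initialSegment π k) = x := by
  have hsum (i : Fin 5) :
      ∑ k, (ext x (π k.succ) - ext x (π k.castSucc)) * ext (ray (initialSegment π k)) i
        = ext x i := by
    simp only [ext_ray, initialSegment, mem_filter, mem_univ, true_and, mul_sub, mul_ite,
      mul_one, mul_zero, sum_sub_distrib]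
    rw [Fin.sum_ite_le_castSucc_sub (fun m => ext x (π m)),
      Fin.sum_ite_le_castSucc_sub (fun m => ext x (π m)), Equiv.apply_symm_apply,
      Equiv.apply_symm_apply, ext_apply_zero]
    abel
  funext j
  simpa [ext_apply_succ] using hsum j.succ

open Matrix

def LinearOnCells (h : (Fin 4 → ℝ) → ℝ) : Prop :=
  ∀ π : Equiv.Perm (Fin 5), ∃ a : Fin 4 → ℝ, ∀ x ∈ cell π, h x = a ⬝ᵥ x

namespace LinearOnCells

variable {f h : (Fin 4 → ℝ) → ℝ}

theorem apply_zero (hh : LinearOnCells h) : h 0 = 0 := by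
  obtain ⟨a, ha⟩ := hh 1
  rw [ha 0 (zero_mem_cell 1), dotProduct_zero]

theorem sum {ι : Type*} {s : Finset ι} {c : ι → ℝ} {f : ι → (Fin 4 → ℝ) → ℝ}
    (hf : ∀ i ∈ s, LinearOnCells (f i)) : LinearOnCells fun x => ∑ i ∈ s, c i * f i x := by
  intro π
  choose! a ha using fun i hi => hf i hi π
  refine ⟨∑ i ∈ s, c i • a i, fun x hx => ?_⟩
  rw [sum_dotProduct]
  exact sum_congr rfl fun i hi => by rw [ha i hi x hx, smul_dotProduct, smul_eq_mul]

theorem apply_eq_sum_ray (hh : LinearOnCells h) {π : Equiv.Perm (Fin 5)} {x : Fin 4 → ℝ}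
    (hx : x ∈ cell π) :
    h x = ∑ k, (ext x (π k.succ) - ext x (π k.castSucc)) * h (ray (initialSegment π k)) := by
  obtain ⟨a, ha⟩ := hh π
  conv_lhs => rw [ha x hx, ← sum_smul_ray_initialSegment x π, dotProduct_sum]
  refine sum_congr rfl fun k _ => ?_
  rw [dotProduct_smul, smul_eq_mul, ha _ (ray_initialSegment_mem_cell π k)]

theorem eq_of_forall_ray (hf : LinearOnCells f) (hh : LinearOnCells h)
    (hray : ∀ S, f (ray S) = h (ray S)) : f = h := by
  funext x
  obtain ⟨π, hx⟩ := exists_mem_cell x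
  simp only [hf.apply_eq_sum_ray hx, hh.apply_eq_sum_ray hx, hray]

end LinearOnCells

theorem Hconforming.linearOnCells {g : (Fin 4 → ℝ) → ℝ} (hg : Hconforming g) :
    LinearOnCells g :=
  hg.2.2

theorem exists_ext_apply_eq_dotProduct (i : Fin 5) :
    ∃ a : Fin 4 → ℝ, ∀ x, ext x i = a ⬝ᵥ x := by
  cases i using Fin.cases with
  | zero => exact ⟨0, fun x => by rw [ext_apply_zero, zero_dotProduct]⟩
  | succ j => exact ⟨Pi.single j 1, fun x => by rw [ext_apply_succ, single_one_dotProduct]⟩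

theorem gM_eq_of_mem_cell {M : Finset (Fin 5)} (hM : M.Nonempty) {π : Equiv.Perm (Fin 5)}
    {x : Fin 4 → ℝ} (hx : x ∈ cell π) : gM M x = ext x (π (M.sup' hM π.symm)) := by
  have hmono : Monotone fun m => ext x (π m) := Fin.monotone_iff_le_succ.2 hx
  rw [gM, dif_pos hM, apply_sup'_eq_sup'_comp hM (fun m => ext x (π m)) hmono.map_sup]
  simp only [Function.comp_def, Equiv.apply_symm_apply]

theorem linearOnCells_gM (M : Finset (Fin 5)) : LinearOnCells (gM M) := by
  intro π
  by_cases hM : M.Nonempty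
  · obtain ⟨a, ha⟩ := exists_ext_apply_eq_dotProduct (π (M.sup' hM π.symm))
    exact ⟨a, fun x hx => by rw [gM_eq_of_mem_cell hM hx, ha]⟩
  · exact ⟨0, fun x _ => by rw [gM, dif_neg hM, zero_dotProduct]⟩

theorem gM_ray {M : Finset (Fin 5)} (hM : M.Nonempty) (S : Finset (Fin 5)) :
    gM M (ray S) = (if 0 ∈ S then 1 else 0) - (if M ⊆ S then 1 else 0) := by
  rw [gM, dif_pos hM]
  by_cases hMS : M ⊆ S
  · rw [sup'_congr hM rfl fun i hi => by rw [ext_ray, if_pos (hMS hi)], sup'_const, if_pos hMS]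
  · obtain ⟨i, hiM, hiS⟩ := not_subset.1 hMS
    refine le_antisymm (sup'_le hM _ fun j _ => ?_) (le_sup'_of_le _ hiM ?_) <;>
      simp only [ext_ray, if_neg hMS, if_neg hiS] <;> split_ifs <;> norm_num

theorem gM_eq_zero_of_subset_singleton_zero {M : Finset (Fin 5)} (hM : M ⊆ {0})
    (x : Fin 4 → ℝ) : gM M x = 0 := by
  obtain rfl | rfl := subset_singleton_iff.1 hM <;> simp [gM, ext_apply_zero]

theorem phi_eq_sum_of_apply_zero {h : (Fin 4 → ℝ) → ℝ} (h0 : h 0 = 0) :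
    phi h = ∑ S, (-1 : ℝ) ^ #S * h (ray S) := by
  refine sum_filter_of_ne fun S _ hS =>
    ⟨nonempty_iff_ne_empty.2 fun hS' => hS ?_, fun hS' => hS ?_⟩
  · rw [hS', ray_empty, h0, mul_zero]
  · rw [hS', ray_univ, h0, mul_zero]

theorem phi_sum {ι : Type*} (s : Finset ι) (c : ι → ℝ) (f : ι → (Fin 4 → ℝ) → ℝ) :
    phi (fun x => ∑ i ∈ s, c i * f i x) = ∑ i ∈ s, c i * phi (f i) := by
  simp only [phi, mul_sum]
  rw [sum_comm]
  exact sum_congr rfl fun i _ => sum_congr rfl fun S _ => by ring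

theorem phi_gM {M : Finset (Fin 5)} (hM : M.Nonempty) (hMU : M ≠ univ) : phi (gM M) = 0 := by
  rw [phi_eq_sum_of_apply_zero (linearOnCells_gM M).apply_zero]
  simp only [gM_ray hM, ← singleton_subset_iff, mul_sub, mul_ite, mul_one, mul_zero,
    sum_sub_distrib, sum_superset_neg_one_pow_card hMU,
    sum_superset_neg_one_pow_card (show ({0} : Finset (Fin 5)) ≠ univ by decide), sub_zero]

theorem sum_subsetMoebius_mul_gM_ray {v : Finset (Fin 5) → ℝ} (hv₀ : v ∅ = 0)
    (hv₁ : v univ = 0) (S : Finset (Fin 5)) : ∑ M, subsetMoebius v M * gM M (ray S) = -v S := by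
  have hterm (M : Finset (Fin 5)) : subsetMoebius v M * gM M (ray S)
      = subsetMoebius v M * ((if 0 ∈ S then 1 else 0) - (if M ⊆ S then 1 else 0)) := by
    obtain rfl | hM := M.eq_empty_or_nonempty
    · rw [subsetMoebius_empty, hv₀, zero_mul, zero_mul]
    · rw [gM_ray hM]
  have hall := sum_powerset_subsetMoebius v univ
  have hsub := sum_powerset_subsetMoebius v S
  rw [powerset_univ, hv₁] at hall
  rw [sum_congr rfl fun M _ => hterm M]
  simp only [mul_sub, sum_sub_distrib]
  rw [← sum_mul, hall, zero_mul, zero_sub, neg_inj, ← hsub]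
  simp only [mul_ite, mul_one, mul_zero, ← sum_filter]
  exact sum_congr (by ext; simp) fun _ _ => rfl

theorem LinearOnCells.eq_sum_subsetMoebius_mul_gM {g : (Fin 4 → ℝ) → ℝ}
    (hg : LinearOnCells g) (x : Fin 4 → ℝ) :
    g x = ∑ M, -subsetMoebius (fun S => g (ray S)) M * gM M x := by
  have hv₀ : g (ray ∅) = 0 := by rw [ray_empty, hg.apply_zero]
  have hv₁ : g (ray univ) = 0 := by rw [ray_univ, hg.apply_zero]
  refine congrFun (hg.eq_of_forall_ray (.sum fun M _ => linearOnCells_gM M) fun S => ?_) x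
  simp only [neg_mul, sum_neg_distrib, neg_neg,
    sum_subsetMoebius_mul_gM_ray (v := fun S => g (ray S)) hv₀ hv₁]

theorem subsetMoebius_univ_eq_neg_phi {g : (Fin 4 → ℝ) → ℝ} (hg₀ : g 0 = 0) :
    subsetMoebius (fun S => g (ray S)) univ = -phi g := by
  rw [subsetMoebius, powerset_univ, ← phi_eq_sum_of_apply_zero hg₀, card_univ,
    Fintype.card_fin]
  norm_num

/-- a function `g ∈ S³⁰` is contained in `S²⁹` if and only if `φ(g) = 0`. -/
theorem mem_s29_iff_phi_eq_zero (g : (Fin 4 → ℝ) → ℝ) (hg : Hconforming g) :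
    InS29 g ↔ phi g = 0 := by
  constructor
  · rintro ⟨c, hc, hgc⟩
    rw [show g = fun x => ∑ M, c M * gM M x from funext hgc, phi_sum]
    refine sum_eq_zero fun M _ => ?_
    by_cases hM : M.Nonempty ∧ M ≠ {0} ∧ M ≠ univ
    · rw [phi_gM hM.1 hM.2.2, mul_zero]
    · rw [hc M hM, zero_mul]
  · intro hphi
    have hb₁ : subsetMoebius (fun S => g (ray S)) univ = 0 := by
      rw [subsetMoebius_univ_eq_neg_phi hg.linearOnCells.apply_zero, hphi, neg_zero]
    refine ⟨fun M => if M.Nonempty ∧ M ≠ {0} ∧ M ≠ univ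
      then -subsetMoebius (fun S => g (ray S)) M else 0, fun M hM => if_neg hM, fun x => ?_⟩
    rw [hg.linearOnCells.eq_sum_subsetMoebius_mul_gM x]
    refine sum_congr rfl fun M _ => ?_
    dsimp only
    split_ifs with hM
    · rfl
    obtain rfl | hMU := eq_or_ne M univ
    · rw [hb₁, neg_zero]
    · have hM0 : M ⊆ {0} := subset_singleton_iff.2 <| by
        rw [← not_nonempty_iff_eq_empty]; tauto
      rw [gM_eq_zero_of_subset_singleton_zero hM0, mul_zero, mul_zero]
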